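/- Let |ψ⟩ be a unit vector in H_C ⊗ H_P, let E be an orthogonal projection on H_P and Ẽ an orthogonal projection on H_C. Suppose |⟨ψ|(I⊗E)|ψ⟩ − 1/2| ≤ ε, |⟨ψ|(Ẽ⊗I)|ψ⟩ − 1/2| ≤ ε, and ⟨ψ|(Ẽ⊗E)|ψ⟩ ≥ 1/2 − ε. Then ‖(I⊗E)|ψ⟩ − (Ẽ⊗I)|ψ⟩‖ ≤ 2√ε. -/

import Mathlib

open Matrix Kronecker
open scoped ComplexOrder

/-- The Schatten 1-norm (trace norm) of a complex matrix: `tr √(AᴴA)`. -/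
noncomputable def traceNorm {n : Type*} [Fintype n] [DecidableEq n]
    (A : Matrix n n ℂ) : ℝ :=
  (((Matrix.posSemidef_conjTranspose_mul_self A).1.eigenvectorUnitary : Matrix n n ℂ) *
    diagonal (((↑) : ℝ → ℂ) ∘ Real.sqrt ∘ (Matrix.posSemidef_conjTranspose_mul_self A).1.eigenvalues) *
    (star (Matrix.posSemidef_conjTranspose_mul_self A).1.eigenvectorUnitary : Matrix n n ℂ)).trace.re

/-- Package a plain function as a vector of the corresponding Euclidean space. -/
noncomputable def toEuc {ι : Type*} (f : ι → ℂ) : EuclideanSpace ℂ ι :=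
  (WithLp.equiv 2 (ι → ℂ)).symm f

/-- Partial trace over the second tensor factor. -/
noncomputable def ptrR {m p : Type*} [Fintype p] (M : Matrix (m × p) (m × p) ℂ) :
    Matrix m m ℂ :=
  Matrix.of fun i j => ∑ y, M (i, y) (j, y)

/-- Pauli-Z matrix. -/
noncomputable def tauz : Matrix (Fin 2) (Fin 2) ℂ := !![1, 0; 0, -1]

/-- Pauli-X matrix. -/
noncomputable def taux : Matrix (Fin 2) (Fin 2) ℂ := !![0, 1; 1, 0]

/-!
With `x = Pψ` and `y = Qψ` for the two projections, `‖x‖² = ⟨ψ, Pψ⟩` and `‖y‖² = ⟨ψ, Qψ⟩` are at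
most `1/2 + ε`, while `Re ⟨x, y⟩ = Re ⟨ψ, PQψ⟩ ≥ 1/2 - ε`, so
`‖x - y‖² = ‖x‖² + ‖y‖² - 2 Re ⟨x, y⟩ ≤ 4ε`.
-/

lemma RCLike.re_le_re_add_of_norm_sub_le {𝕜 : Type*} [RCLike 𝕜] {z w : 𝕜} {ε : ℝ}
    (h : ‖z - w‖ ≤ ε) : RCLike.re z ≤ RCLike.re w + ε := by
  have := (RCLike.re_le_norm (z - w)).trans h
  rw [map_sub] at this
  linarith

section Projection

variable {𝕜 E : Type*} [RCLike 𝕜] [NormedAddCommGroup E] [InnerProductSpace 𝕜 E]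

lemma LinearMap.IsSymmetricProjection.norm_apply_sq {p : E →ₗ[𝕜] E}
    (hp : p.IsSymmetricProjection) (x : E) :
    ‖p x‖ ^ 2 = RCLike.re (inner 𝕜 x (p x)) := by
  rw [@norm_sq_eq_re_inner 𝕜, hp.isSymmetric, ← Module.End.mul_apply, hp.isIdempotentElem.eq]

lemma LinearMap.IsSymmetricProjection.norm_sub_apply_le_two_mul_sqrt
    {p q : E →ₗ[𝕜] E} (hp : p.IsSymmetricProjection) (hq : q.IsSymmetricProjection)
    {x : E} {a ε : ℝ} (hpx : RCLike.re (inner 𝕜 x (p x)) ≤ a + ε)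
    (hqx : RCLike.re (inner 𝕜 x (q x)) ≤ a + ε)
    (hpqx : a - ε ≤ RCLike.re (inner 𝕜 x (p (q x)))) :
    ‖p x - q x‖ ≤ 2 * Real.sqrt ε := by
  have hsq : ‖p x - q x‖ ^ 2 ≤ 2 ^ 2 * ε := by
    rw [norm_sub_sq (𝕜 := 𝕜), hp.norm_apply_sq, hq.norm_apply_sq, hp.isSymmetric]
    linarith
  calc ‖p x - q x‖ = Real.sqrt (‖p x - q x‖ ^ 2) := (Real.sqrt_sq (norm_nonneg _)).symm
    _ ≤ Real.sqrt (2 ^ 2 * ε) := Real.sqrt_le_sqrt hsq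
    _ = 2 * Real.sqrt ε := by rw [Real.sqrt_mul (by positivity), Real.sqrt_sq zero_le_two]

end Projection

section Matrix

variable {𝕜 ι : Type*} [RCLike 𝕜] [Fintype ι] [DecidableEq ι]

lemma Matrix.toEuclideanLin_mul_apply {l κ : Type*} [Fintype κ] [DecidableEq κ]
    (A : Matrix l ι 𝕜) (B : Matrix ι κ 𝕜) (x : EuclideanSpace 𝕜 κ) :
    toEuclideanLin (A * B) x = toEuclideanLin A (toEuclideanLin B x) := by
  simp [toLpLin_apply, mulVec_mulVec]

lemma IsStarProjection.isSymmetricProjection_toEuclideanLin {A : Matrix ι ι 𝕜}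
    (hA : IsStarProjection A) : (toEuclideanLin A).IsSymmetricProjection where
  isIdempotentElem := LinearMap.ext fun x => by
    rw [Module.End.mul_apply, ← toEuclideanLin_mul_apply, hA.isIdempotentElem.eq]
  isSymmetric := isSymmetric_toEuclideanLin_iff.mpr hA.isSelfAdjoint

lemma IsStarProjection.kronecker {R l n : Type*} [CommSemiring R] [StarRing R]
    [Fintype l] [Fintype n] {A : Matrix l l R} {B : Matrix n n R}
    (hA : IsStarProjection A) (hB : IsStarProjection B) : IsStarProjection (A ⊗ₖ B) where
  isIdempotentElem := by
    rw [IsIdempotentElem, ← mul_kronecker_mul, hA.isIdempotentElem.eq, hB.isIdempotentElem.eq]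
  isSelfAdjoint := by
    rw [IsSelfAdjoint, star_eq_conjTranspose, conjTranspose_kronecker, ← star_eq_conjTranspose,
      ← star_eq_conjTranspose, hA.isSelfAdjoint.star_eq, hB.isSelfAdjoint.star_eq]

end Matrix

theorem stmt2_general {m n : ℕ} (ψ : EuclideanSpace ℂ (Fin m × Fin n))
    (E : Matrix (Fin n) (Fin n) ℂ) (Et : Matrix (Fin m) (Fin m) ℂ)
    (hE1 : Eᴴ = E) (hE2 : E * E = E) (hEt1 : Etᴴ = Et) (hEt2 : Et * Et = Et)
    (ε : ℝ)
    (h1 : ‖((inner ℂ ψ (Matrix.toEuclideanLin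
        ((1 : Matrix (Fin m) (Fin m) ℂ) ⊗ₖ E) ψ) : ℂ) - 1/2)‖ ≤ ε)
    (h2 : ‖((inner ℂ ψ (Matrix.toEuclideanLin
        (Et ⊗ₖ (1 : Matrix (Fin n) (Fin n) ℂ)) ψ) : ℂ) - 1/2)‖ ≤ ε)
    (h3 : ((inner ℂ ψ (Matrix.toEuclideanLin (Et ⊗ₖ E) ψ) : ℂ)).re ≥ 1/2 - ε) :
    ‖Matrix.toEuclideanLin ((1 : Matrix (Fin m) (Fin m) ℂ) ⊗ₖ E) ψ -
      Matrix.toEuclideanLin (Et ⊗ₖ (1 : Matrix (Fin n) (Fin n) ℂ)) ψ‖ ≤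
      2 * Real.sqrt ε := by
  have hE : IsStarProjection E := ⟨hE2, hE1⟩
  have hEt : IsStarProjection Et := ⟨hEt2, hEt1⟩
  have hPQ : (1 : Matrix (Fin m) (Fin m) ℂ) ⊗ₖ E * Et ⊗ₖ (1 : Matrix (Fin n) (Fin n) ℂ) =
      Et ⊗ₖ E := by
    rw [← mul_kronecker_mul, one_mul, mul_one]
  refine LinearMap.IsSymmetricProjection.norm_sub_apply_le_two_mul_sqrt (a := 1 / 2)
    ((IsStarProjection.one _).kronecker hE).isSymmetricProjection_toEuclideanLin
    (hEt.kronecker (IsStarProjection.one _)).isSymmetricProjection_toEuclideanLin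
    ?_ ?_ ?_
  · simpa using RCLike.re_le_re_add_of_norm_sub_le h1
  · simpa using RCLike.re_le_re_add_of_norm_sub_le h2
  · rwa [← toEuclideanLin_mul_apply, hPQ]

/-- if `|⟨ψ|(I⊗E)|ψ⟩ − 1/2| ≤ ε`, `|⟨ψ|(Ẽ⊗I)|ψ⟩ − 1/2| ≤ ε` and
`⟨ψ|(Ẽ⊗E)|ψ⟩ ≥ 1/2 − ε` for projections `E` on `H_P` and `Ẽ` on `H_C`, then
`‖(I⊗E)|ψ⟩ − (Ẽ⊗I)|ψ⟩‖ ≤ 2√ε`. -/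
theorem stmt2 {m n : ℕ} (ψ : EuclideanSpace ℂ (Fin m × Fin n)) (hψ : ‖ψ‖ = 1)
    (E : Matrix (Fin n) (Fin n) ℂ) (Et : Matrix (Fin m) (Fin m) ℂ)
    (hE1 : Eᴴ = E) (hE2 : E * E = E) (hEt1 : Etᴴ = Et) (hEt2 : Et * Et = Et)
    (ε : ℝ) (hε : 0 ≤ ε)
    (h1 : ‖((inner ℂ ψ (Matrix.toEuclideanLin
        ((1 : Matrix (Fin m) (Fin m) ℂ) ⊗ₖ E) ψ) : ℂ) - 1/2)‖ ≤ ε)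
    (h2 : ‖((inner ℂ ψ (Matrix.toEuclideanLin
        (Et ⊗ₖ (1 : Matrix (Fin n) (Fin n) ℂ)) ψ) : ℂ) - 1/2)‖ ≤ ε)
    (h3 : ((inner ℂ ψ (Matrix.toEuclideanLin (Et ⊗ₖ E) ψ) : ℂ)).re ≥ 1/2 - ε) :
    ‖Matrix.toEuclideanLin ((1 : Matrix (Fin m) (Fin m) ℂ) ⊗ₖ E) ψ -
      Matrix.toEuclideanLin (Et ⊗ₖ (1 : Matrix (Fin n) (Fin n) ℂ)) ψ‖ ≤
      2 * Real.sqrt ε :=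
  stmt2_general ψ E Et hE1 hE2 hEt1 hEt2 ε h1 h2 h3
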